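/- arXiv:1805.08571 — 2 statements merged into one kernel-verified Lean document; each statement's English description precedes it below -/
import Mathlib

section
/- Let X ∈ ℝ^{n×d}, w ∈ ℝⁿ with all wᵢ > 0, and suppose X weighted by w is μ-complex, i.e., for all β ≠ 0, ‖(D_w X β)⁺‖₁ ≤ μ‖(D_w X β)⁻‖₁. Let U be an orthonormal basis for the column space of D_w X, with rows Uᵢ, and let xᵢ denote the i-th row of X. If β ∈ ℝ^d satisfies xᵢβ ≥ 1/2, then wᵢ g(xᵢβ) ≤ 2(1+μ)‖Uᵢ‖₂ · Σⱼ wⱼ g(xⱼβ), where g(z) = ln(1+exp(z)). -/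
open Matrix

lemma g_nonneg' (z : ℝ) : 0 ≤ Real.log (1 + Real.exp z) := by
  apply Real.log_nonneg; nlinarith [Real.exp_pos z]

lemma le_g' (z : ℝ) : z ≤ Real.log (1 + Real.exp z) := by
  rw [Real.le_log_iff_exp_le (by positivity)]
  nlinarith [Real.exp_pos z]

lemma g_le_two_mul' (z : ℝ) (hz : 1/2 ≤ z) : Real.log (1 + Real.exp z) ≤ 2 * z := by
  rw [← Real.log_exp (2*z)]
  apply Real.log_le_log (by positivity)
  have h1 : Real.exp (2*z) = Real.exp z * Real.exp z := by
    rw [← Real.exp_add]; ring_nf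
  have h2 : Real.exp (1/2 : ℝ) ≤ Real.exp z := Real.exp_le_exp.2 hz
  have h3 : Real.exp (1/2:ℝ) * Real.exp (1/2:ℝ) = Real.exp 1 := by
    rw [← Real.exp_add]; norm_num
  have h4 := Real.exp_one_gt_d9
  have h5 := Real.exp_one_lt_d9
  have hs := Real.exp_pos (1/2:ℝ)
  nlinarith [Real.exp_pos z, mul_le_mul h2 h2 hs.le (Real.exp_pos z).le,
    sq_nonneg (Real.exp (1/2:ℝ) - 1659/1000)]

open Matrix in
theorem sensitivity_bound_large_part {n d : ℕ}
    (X : Matrix (Fin n) (Fin d) ℝ) (w : Fin n → ℝ) (hw : ∀ i, 0 < w i)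
    (μ : ℝ) (hμ : 0 ≤ μ)
    (hcomplex : ∀ β : Fin d → ℝ, β ≠ 0 →
      (∑ j, max ((Matrix.diagonal w * X).mulVec β j) 0) ≤
        μ * (∑ j, max (-((Matrix.diagonal w * X).mulVec β j)) 0))
    (U : Matrix (Fin n) (Fin d) ℝ) (R : Matrix (Fin d) (Fin d) ℝ)
    (hortho : Uᵀ * U = 1) (hUR : Matrix.diagonal w * X = U * R)
    (g : ℝ → ℝ) (hg : ∀ z, g z = Real.log (1 + Real.exp z))
    (i : Fin n) (β : Fin d → ℝ) (hβ : (1/2 : ℝ) ≤ X.mulVec β i) :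
    w i * g (X.mulVec β i) ≤
      2 * (1 + μ) * Real.sqrt (∑ k, (U i k) ^ 2) * (∑ j, w j * g (X.mulVec β j)) := by
  set z : Fin n → ℝ := X.mulVec β with hz
  set v : Fin n → ℝ := (Matrix.diagonal w * X).mulVec β with hvdef
  have hv : ∀ j, v j = w j * z j := by
    intro j
    rw [hvdef, ← Matrix.mulVec_mulVec, Matrix.mulVec_diagonal]
  -- β ≠ 0
  have hβ0 : β ≠ 0 := by
    intro h
    have hzi : z i = 0 := by simp [hz, h]
    rw [hzi] at hβ; linarith
  -- complexity at -β
  have hcneg := hcomplex (-β) (neg_ne_zero.mpr hβ0)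
  have hvneg : ∀ j, (Matrix.diagonal w * X).mulVec (-β) j = -(v j) := by
    intro j; rw [Matrix.mulVec_neg]; rfl
  simp only [hvneg, neg_neg] at hcneg
  -- hcneg : ∑ j, max (-(v j)) 0 ≤ μ * ∑ j, max (v j) 0
  set S : ℝ := ∑ j, w j * g (z j) with hS
  set P : ℝ := ∑ j, max (v j) 0 with hP
  have hPS : P ≤ S := by
    apply Finset.sum_le_sum
    intro j _
    rw [hv j, hg]
    rcases le_total (z j) 0 with h | h
    · have : max (w j * z j) 0 = 0 := max_eq_right (by nlinarith [(hw j).le])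
      rw [this]
      exact mul_nonneg (hw j).le (g_nonneg' _)
    · have : max (w j * z j) 0 = w j * z j := max_eq_left (mul_nonneg (hw j).le h)
      rw [this]
      exact mul_le_mul_of_nonneg_left (le_g' _) (hw j).le
  have hPnn : 0 ≤ P := Finset.sum_nonneg fun j _ => le_max_right _ _
  -- ℓ1 norm bound
  have hl1 : ∑ j, |v j| ≤ (1 + μ) * P := by
    have : ∀ j : Fin n, |v j| = max (v j) 0 + max (-(v j)) 0 := by
      intro j
      rcases le_total (v j) 0 with h | h
      · rw [abs_of_nonpos h, max_eq_right h, max_eq_left (neg_nonneg.mpr h)]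
        ring
      · rw [abs_of_nonneg h, max_eq_left h, max_eq_right (neg_nonpos.mpr h)]
        ring
    calc ∑ j, |v j| = P + ∑ j, max (-(v j)) 0 := by
          rw [hP, ← Finset.sum_add_distrib]
          exact Finset.sum_congr rfl fun j _ => this j
      _ ≤ P + μ * P := by linarith
      _ = (1 + μ) * P := by ring
  -- ℓ2 ≤ ℓ1
  have hl2l1 : Real.sqrt (∑ j, (v j)^2) ≤ ∑ j, |v j| := by
    rw [show (∑ j, (v j)^2) = ∑ j, |v j|^2 by simp [sq_abs]]
    have h1 : ∑ j, |v j|^2 ≤ (∑ j, |v j|)^2 := by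
      rw [sq (∑ j, |v j|), Finset.sum_mul]
      apply Finset.sum_le_sum
      intro j _
      rw [sq]
      exact mul_le_mul_of_nonneg_left
        (Finset.single_le_sum (fun k _ => abs_nonneg (v k)) (Finset.mem_univ j))
        (abs_nonneg _)
    calc Real.sqrt (∑ j, |v j|^2) ≤ Real.sqrt ((∑ j, |v j|)^2) :=
          Real.sqrt_le_sqrt h1
      _ = ∑ j, |v j| := Real.sqrt_sq (Finset.sum_nonneg fun j _ => abs_nonneg _)
  -- norm preservation
  set y : Fin d → ℝ := R.mulVec β with hy
  have hvU : v = U.mulVec y := by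
    rw [hvdef, hUR, hy, Matrix.mulVec_mulVec]
  have hnorm : ∑ k, (y k)^2 = ∑ j, (v j)^2 := by
    have h1 : v ⬝ᵥ v = y ⬝ᵥ y := by
      rw [hvU]
      calc U.mulVec y ⬝ᵥ U.mulVec y
          = Uᵀ.mulVec (U.mulVec y) ⬝ᵥ y := by
            rw [Matrix.dotProduct_mulVec, Matrix.mulVec_transpose]
        _ = y ⬝ᵥ y := by
            rw [Matrix.mulVec_mulVec, hortho, Matrix.one_mulVec]
    simp only [dotProduct, ← sq] at h1
    exact h1.symm
  -- Cauchy-Schwarz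
  set nU : ℝ := Real.sqrt (∑ k, (U i k)^2) with hnU
  have hnUnn : 0 ≤ nU := Real.sqrt_nonneg _
  have hCS : v i ≤ nU * Real.sqrt (∑ j, (v j)^2) := by
    have h1 : v i = ∑ k, U i k * y k := by rw [hvU]; rfl
    have h3 : (v i)^2 ≤ (∑ k, (U i k)^2) * (∑ k, (y k)^2) := by
      rw [h1]
      exact Finset.sum_mul_sq_le_sq_mul_sq _ _ _
    calc v i ≤ |v i| := le_abs_self _
      _ = Real.sqrt ((v i)^2) := (Real.sqrt_sq_eq_abs _).symm
      _ ≤ Real.sqrt ((∑ k, (U i k)^2) * (∑ k, (y k)^2)) := Real.sqrt_le_sqrt h3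
      _ = nU * Real.sqrt (∑ k, (y k)^2) := by
          rw [Real.sqrt_mul (Finset.sum_nonneg fun k _ => sq_nonneg _)]
      _ = nU * Real.sqrt (∑ j, (v j)^2) := by rw [hnorm]
  -- assemble
  have hchain : v i ≤ nU * ((1 + μ) * S) := by
    have h1 : Real.sqrt (∑ j, (v j)^2) ≤ (1 + μ) * S := by
      calc Real.sqrt (∑ j, (v j)^2) ≤ ∑ j, |v j| := hl2l1
        _ ≤ (1 + μ) * P := hl1
        _ ≤ (1 + μ) * S := by nlinarith
    calc v i ≤ nU * Real.sqrt (∑ j, (v j)^2) := hCS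
      _ ≤ nU * ((1 + μ) * S) := mul_le_mul_of_nonneg_left h1 hnUnn
  calc w i * g (z i) ≤ w i * (2 * z i) := by
        rw [hg]; exact mul_le_mul_of_nonneg_left (g_le_two_mul' _ hβ) (hw i).le
    _ = 2 * v i := by rw [hv i]; ring
    _ ≤ 2 * (nU * ((1 + μ) * S)) := by linarith
    _ = 2 * (1 + μ) * nU * S := by ring
end

section
/- Consider the one-dimensional dataset (with intercept) consisting of the labeled points: one point at −n with label −1, n points at 1 with label −1, one point at n with label +1, and n points at −1 with label +1. For β = (β₀, β₁) with β₀ = 0, the logistic loss f(β) = Σᵢ ln(1 + exp(−yᵢ(β₀ + xᵢβ₁))) satisfies f(β) ≥ 2n·ln(1 + exp(β₁)) ≥ 2nβ₁ whenever β₁ ≥ 0. -/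
theorem uniform_sampling_hard_instance_loss (n : ℕ) (β₁ : ℝ) (hβ₁ : 0 ≤ β₁) :
    let β₀ : ℝ := 0
    let L : ℝ → ℝ → ℝ := fun y x => Real.log (1 + Real.exp (-y * (β₀ + x * β₁)))
    2 * n * β₁ ≤ 2 * n * Real.log (1 + Real.exp β₁) ∧
      2 * n * Real.log (1 + Real.exp β₁) ≤
        L (-1) (-(n : ℝ)) + L 1 (n : ℝ) + n * L (-1) 1 + n * L 1 (-1) := by
  intro β₀ L
  have hpos : (0:ℝ) < 1 + Real.exp β₁ := by positivity
  have hkey : β₁ ≤ Real.log (1 + Real.exp β₁) := by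
    calc β₁ = Real.log (Real.exp β₁) := (Real.log_exp β₁).symm
    _ ≤ Real.log (1 + Real.exp β₁) :=
      Real.log_le_log (Real.exp_pos β₁) (by linarith)
  have hL1 : L (-1) 1 = Real.log (1 + Real.exp β₁) := by simp [L, β₀]
  have hL2 : L 1 (-1) = Real.log (1 + Real.exp β₁) := by simp [L, β₀]
  have hnn : ∀ y x : ℝ, 0 ≤ L y x := by
    intro y x
    have : (1:ℝ) ≤ 1 + Real.exp (-y * (β₀ + x * β₁)) := by
      have := Real.exp_pos (-y * (β₀ + x * β₁)); linarith
    simpa [L] using Real.log_nonneg this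
  constructor
  · nlinarith [Nat.cast_nonneg (α := ℝ) n]
  · have h1 := hnn (-1) (-(n:ℝ))
    have h2 := hnn 1 (n:ℝ)
    rw [hL1, hL2]
    ring_nf
    nlinarith
end
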